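/- Let V be a separable Hilbert space, and for ℓ = 0,…,L let D_ℓ := u_ℓ − u_{ℓ-1} ∈ L²(Ω;V) (with u_{-1} := 0) be level corrections. Let M₀ ≥ M₁ ≥ … ≥ M_L ≥ 0 =: M_{L+1} be sample numbers and build the bootstrap estimator E^L_{BS} := Σ_{ℓ=0}^L (1/M_ℓ) Σ_{i=1}^{M_ℓ} D_ℓ^{(i)} from i.i.d. copies (u_ℓ^{(i)})_ℓ that are independent across i but use the same sample i on all levels. Then E[E^L_{BS}] = E[u_L], and Var(E^L_{BS}) = Σ_{ℓ=0}^L (M_ℓ − M_{ℓ+1}) · Var( Σ_{k=0}^{ℓ} D_k / M_k ). -/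

import Mathlib

/-!
Exchanging the two sums writes the bootstrap estimator as `∑_{i < M₀} Bᵢ`, where `Bᵢ` collects the
terms of sample `i`, namely `∑ D_ℓ⁽ⁱ⁾ / M_ℓ` over the levels `ℓ` with `i < M_ℓ`; it is a measurable
function of the `i`-th tuple of samples. The `Bᵢ` are independent, so their variances add, and for
`M_{ℓ+1} ≤ i < M_ℓ` the variable `Bᵢ` has the law of `∑_{k ≤ ℓ} D_k / M_k`, which occurs
`M_ℓ - M_{ℓ+1}` times. For the mean, `Bᵢ` may be replaced by the same function of `(u_ℓ)_ℓ`;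
summed over `i` this is the estimator evaluated on one fixed sequence, which telescopes to `u_L`.
-/

open MeasureTheory ProbabilityTheory Finset
open scoped RealInnerProductSpace

section Variance

variable {Ω V ι : Type*} [MeasurableSpace Ω] {μ : Measure Ω}
  [NormedAddCommGroup V] [InnerProductSpace ℝ V]

noncomputable def normVariance (X : Ω → V) (μ : Measure Ω) : ℝ :=
  ∫ ω, ‖X ω - ∫ ω', X ω' ∂μ‖ ^ 2 ∂μ

lemma MeasureTheory.MemLp.integrable_inner {X Y : Ω → V} (hX : MemLp X 2 μ) (hY : MemLp Y 2 μ) :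
    Integrable (fun ω => ⟪X ω, Y ω⟫) μ :=
  (L2.integrable_inner (𝕜 := ℝ) (hX.toLp X) (hY.toLp Y)).congr <| by
    filter_upwards [hX.coeFn_toLp, hY.coeFn_toLp] with ω hXω hYω
    rw [hXω, hYω]

variable [MeasurableSpace V] [BorelSpace V]

lemma ProbabilityTheory.IdentDistrib.normVariance_eq {Ω' : Type*} [MeasurableSpace Ω']
    {ν : Measure Ω'} {X : Ω → V} {Y : Ω' → V} (h : IdentDistrib X Y μ ν) :
    normVariance X μ = normVariance Y ν := by
  have hmeas : Measurable fun x : V => ‖x - ∫ ω', Y ω' ∂ν‖ ^ 2 := by fun_prop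
  rw [normVariance, h.integral_eq]
  exact (h.comp hmeas).integral_eq

variable [CompleteSpace V]

lemma integral_norm_sum_sq_of_pairwise_indepFun [IsFiniteMeasure μ] {X : ι → Ω → V} {s : Finset ι}
    (hX : ∀ i ∈ s, MemLp (X i) 2 μ) (hmean : ∀ i ∈ s, ∫ ω, X i ω ∂μ = 0)
    (hind : (s : Set ι).Pairwise fun i j => IndepFun (X i) (X j) μ) :
    ∫ ω, ‖∑ i ∈ s, X i ω‖ ^ 2 ∂μ = ∑ i ∈ s, ∫ ω, ‖X i ω‖ ^ 2 ∂μ := by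
  classical
  have hcross : ∀ i ∈ s, ∀ j ∈ s, j ≠ i → ∫ ω, ⟪X i ω, X j ω⟫ ∂μ = 0 := fun i hi j hj hji => by
    refine ((hind hi hj hji.symm).integral_bilin ((hX i hi).integrable one_le_two)
      ((hX j hj).integrable one_le_two) (innerSL ℝ)).trans ?_
    simp [hmean j hj]
  calc ∫ ω, ‖∑ i ∈ s, X i ω‖ ^ 2 ∂μ
      = ∫ ω, ∑ i ∈ s, ∑ j ∈ s, ⟪X i ω, X j ω⟫ ∂μ := by
        simp_rw [← real_inner_self_eq_norm_sq, sum_inner, inner_sum]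
    _ = ∑ i ∈ s, ∑ j ∈ s, ∫ ω, ⟪X i ω, X j ω⟫ ∂μ := by
        rw [integral_finsetSum s fun i hi => integrable_finsetSum s fun j hj =>
          (hX i hi).integrable_inner (hX j hj)]
        exact sum_congr rfl fun i hi =>
          integral_finsetSum s fun j hj => (hX i hi).integrable_inner (hX j hj)
    _ = ∑ i ∈ s, ∫ ω, ‖X i ω‖ ^ 2 ∂μ := by
        refine sum_congr rfl fun i hi => ?_
        rw [sum_eq_single_of_mem i hi (hcross i hi)]
        simp_rw [real_inner_self_eq_norm_sq]

variable [IsProbabilityMeasure μ]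

lemma normVariance_sum_of_pairwise_indepFun {X : ι → Ω → V} {s : Finset ι}
    (hX : ∀ i ∈ s, MemLp (X i) 2 μ)
    (hind : (s : Set ι).Pairwise fun i j => IndepFun (X i) (X j) μ) :
    normVariance (fun ω => ∑ i ∈ s, X i ω) μ = ∑ i ∈ s, normVariance (X i) μ := by
  set c : ι → Ω → V := fun i ω => X i ω - ∫ ω', X i ω' ∂μ
  have hc : ∀ i ∈ s, MemLp (c i) 2 μ := fun i hi => (hX i hi).sub (memLp_const _)
  have hcmean : ∀ i ∈ s, ∫ ω, c i ω ∂μ = 0 := fun i hi => by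
    simp [c, integral_sub ((hX i hi).integrable one_le_two) (integrable_const _)]
  have hcind : (s : Set ι).Pairwise fun i j => IndepFun (c i) (c j) μ := fun i hi j hj hij =>
    (hind hi hj hij).comp (measurable_id.sub_const _) (measurable_id.sub_const _)
  have hsum : ∀ ω, ∑ i ∈ s, X i ω - ∫ ω', ∑ i ∈ s, X i ω' ∂μ = ∑ i ∈ s, c i ω := fun ω => by
    rw [integral_finsetSum s fun i hi => (hX i hi).integrable one_le_two, ← sum_sub_distrib]
  simp only [normVariance, hsum]
  exact integral_norm_sum_sq_of_pairwise_indepFun hc hcmean hcind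

end Variance

section IID

variable {Ω E V ι : Type*} [MeasurableSpace Ω] {μ : Measure Ω} [MeasurableSpace E]
  [NormedAddCommGroup V] [InnerProductSpace ℝ V]
  [MeasurableSpace V] [BorelSpace V] {X : ι → Ω → E} {Y : Ω → E} {Φ : ι → E → V} {s : Finset ι}

lemma integral_sum_comp_eq_of_identDistrib (hid : ∀ i ∈ s, IdentDistrib (X i) Y μ μ)
    (hΦ : ∀ i ∈ s, Measurable (Φ i)) (hY : ∀ i ∈ s, Integrable (fun ω => Φ i (Y ω)) μ) :
    ∫ ω, ∑ i ∈ s, Φ i (X i ω) ∂μ = ∫ ω, ∑ i ∈ s, Φ i (Y ω) ∂μ := by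
  have hcomp : ∀ i ∈ s, IdentDistrib (fun ω => Φ i (X i ω)) (fun ω => Φ i (Y ω)) μ μ :=
    fun i hi => (hid i hi).comp (hΦ i hi)
  rw [integral_finsetSum s fun i hi => (hcomp i hi).integrable_iff.mpr (hY i hi),
    integral_finsetSum s hY]
  exact sum_congr rfl fun i hi => (hcomp i hi).integral_eq

variable [CompleteSpace V]

lemma normVariance_sum_comp_of_iIndepFun [IsProbabilityMeasure μ] (hind : iIndepFun X μ)
    (hid : ∀ i, IdentDistrib (X i) Y μ μ) (hΦ : ∀ i, Measurable (Φ i))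
    (hY : ∀ i ∈ s, MemLp (fun ω => Φ i (Y ω)) 2 μ) :
    normVariance (fun ω => ∑ i ∈ s, Φ i (X i ω)) μ
      = ∑ i ∈ s, normVariance (fun ω => Φ i (Y ω)) μ := by
  have hcomp : ∀ i, IdentDistrib (fun ω => Φ i (X i ω)) (fun ω => Φ i (Y ω)) μ μ :=
    fun i => (hid i).comp (hΦ i)
  rw [normVariance_sum_of_pairwise_indepFun (fun i hi => (hcomp i).memLp_iff.mpr (hY i hi))
    fun i _ j _ hij => (hind.comp Φ hΦ).indepFun hij]
  exact sum_congr rfl fun i _ => (hcomp i).normVariance_eq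

end IID

section Combinatorics

lemma sum_sum_range_comm {β : Type*} [AddCommMonoid β] {s : Finset ℕ} {M : ℕ → ℕ} {N : ℕ}
    (hM : ∀ ℓ ∈ s, M ℓ ≤ N) (f : ℕ → ℕ → β) :
    ∑ ℓ ∈ s, ∑ i ∈ range (M ℓ), f ℓ i = ∑ i ∈ range N, ∑ ℓ ∈ s with i < M ℓ, f ℓ i :=
  sum_comm' fun ℓ i => by
    simp only [mem_range, mem_filter]
    exact ⟨fun h => ⟨⟨h.1, h.2⟩, h.2.trans_le (hM ℓ h.1)⟩, fun h => h.1⟩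

lemma sum_sum_Ico_of_antitoneOn {β : Type*} [AddCommMonoid β] {M : ℕ → ℕ} {n : ℕ}
    (hM : AntitoneOn M (Set.Iic n)) (f : ℕ → β) :
    ∑ ℓ ∈ range n, ∑ i ∈ Ico (M (ℓ + 1)) (M ℓ), f i = ∑ i ∈ Ico (M n) (M 0), f i := by
  induction n with
  | zero => simp
  | succ n ih =>
    have hM' : AntitoneOn M (Set.Iic n) := hM.mono (Set.Iic_subset_Iic.mpr n.le_succ)
    rw [sum_range_succ, ih hM', add_comm]
    refine sum_Ico_consecutive f (hM (by simp) (by simp) n.le_succ) (hM' (by simp) (by simp) ?_)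
    exact n.zero_le

lemma sum_range_eq_sum_mul_of_antitoneOn {M : ℕ → ℕ} {L : ℕ}
    (hM : AntitoneOn M (Set.Iic (L + 1))) (hMend : M (L + 1) = 0) {f c : ℕ → ℝ}
    (hfc : ∀ ℓ ≤ L, ∀ i ∈ Ico (M (ℓ + 1)) (M ℓ), f i = c ℓ) :
    ∑ i ∈ range (M 0), f i = ∑ ℓ ∈ range (L + 1), ((M ℓ : ℝ) - M (ℓ + 1)) * c ℓ := by
  have hblocks := sum_sum_Ico_of_antitoneOn hM f
  rw [hMend, ← range_eq_Ico] at hblocks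
  rw [← hblocks]
  refine sum_congr rfl fun ℓ hℓ => ?_
  have hℓL : ℓ ≤ L := Nat.lt_succ_iff.mp (mem_range.mp hℓ)
  rw [sum_congr rfl (hfc ℓ hℓL), sum_const, Nat.card_Ico, nsmul_eq_mul,
    Nat.cast_sub (hM (by simp; omega) (by simp; omega) ℓ.le_succ)]

variable {V : Type*} [AddCommGroup V]

def levelCorrection (u : ℕ → V) (ℓ : ℕ) : V := u ℓ - if ℓ = 0 then 0 else u (ℓ - 1)

lemma levelCorrection_congr {u u' : ℕ → V} {ℓ : ℕ} (h : ∀ k ≤ ℓ, u k = u' k) :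
    levelCorrection u ℓ = levelCorrection u' ℓ := by
  simp only [levelCorrection, h ℓ le_rfl, h (ℓ - 1) (Nat.sub_le ℓ 1)]

lemma sum_range_levelCorrection (u : ℕ → V) (L : ℕ) :
    ∑ ℓ ∈ range (L + 1), levelCorrection u ℓ = u L := by
  induction L with
  | zero => simp [levelCorrection]
  | succ L ih => rw [sum_range_succ, ih, levelCorrection, if_neg L.succ_ne_zero]; simp

variable [Module ℝ V]

/-- The part of the bootstrap estimator built from sample `i`. -/
noncomputable def sampleContribution (M : ℕ → ℕ) (L i : ℕ) (u : ℕ → V) : V :=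
  ∑ ℓ ∈ range (L + 1) with i < M ℓ, (M ℓ : ℝ)⁻¹ • levelCorrection u ℓ

lemma sampleContribution_congr {M : ℕ → ℕ} {L i : ℕ} {u u' : ℕ → V}
    (h : ∀ k ≤ L, u k = u' k) :
    sampleContribution M L i u = sampleContribution M L i u' := by
  refine sum_congr rfl fun ℓ hℓ => ?_
  have hℓL : ℓ ≤ L := Nat.lt_succ_iff.mp (mem_range.mp (mem_filter.mp hℓ).1)
  rw [levelCorrection_congr fun k hk => h k (hk.trans hℓL)]

/-- `u i` is the `i`-th sample of the whole sequence of levels: all levels share sample `i`. -/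
noncomputable def bootstrapEstimator (M : ℕ → ℕ) (L : ℕ) (u : ℕ → ℕ → V) : V :=
  ∑ ℓ ∈ range (L + 1), (M ℓ : ℝ)⁻¹ • ∑ i ∈ range (M ℓ), levelCorrection (u i) ℓ

lemma bootstrapEstimator_eq_sum_sampleContribution {M : ℕ → ℕ} {L : ℕ}
    (hM : ∀ ℓ ≤ L, M ℓ ≤ M 0) (u : ℕ → ℕ → V) :
    bootstrapEstimator M L u = ∑ i ∈ range (M 0), sampleContribution M L i (u i) := by
  rw [bootstrapEstimator]
  simp_rw [smul_sum]
  exact sum_sum_range_comm (fun ℓ hℓ => hM ℓ (Nat.lt_succ_iff.mp (mem_range.mp hℓ))) _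

lemma sum_sampleContribution_const {M : ℕ → ℕ} {L : ℕ} (hM : ∀ ℓ ≤ L, M ℓ ≤ M 0)
    (hMpos : ∀ ℓ ≤ L, 1 ≤ M ℓ) (u : ℕ → V) :
    ∑ i ∈ range (M 0), sampleContribution M L i u = u L := by
  rw [← bootstrapEstimator_eq_sum_sampleContribution hM fun _ => u, bootstrapEstimator,
    ← sum_range_levelCorrection u L]
  refine sum_congr rfl fun ℓ hℓ => ?_
  have hMℓ : (M ℓ : ℝ) ≠ 0 := by
    have := hMpos ℓ (Nat.lt_succ_iff.mp (mem_range.mp hℓ)); positivity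
  rw [sum_const, card_range, ← Nat.cast_smul_eq_nsmul ℝ, smul_smul, inv_mul_cancel₀ hMℓ, one_smul]

lemma sampleContribution_of_mem_Ico {M : ℕ → ℕ} {L ℓ i : ℕ} (hM : AntitoneOn M (Set.Iic (L + 1)))
    (hℓ : ℓ ≤ L) (hi : i ∈ Ico (M (ℓ + 1)) (M ℓ)) (u : ℕ → V) :
    sampleContribution M L i u = ∑ k ∈ range (ℓ + 1), (M k : ℝ)⁻¹ • levelCorrection u k := by
  obtain ⟨hi₁, hi₂⟩ := mem_Ico.mp hi
  refine sum_congr (ext fun k => ?_) fun _ _ => rfl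
  simp only [mem_filter, mem_range]
  constructor
  · rintro ⟨hk, hik⟩
    by_contra! hℓk
    exact absurd (hi₁.trans_lt hik) (not_lt.mpr (hM (by simp; omega) (by simp; omega) hℓk))
  · intro hk
    exact ⟨by omega, hi₂.trans_le (hM (by simp; omega) (by simp; omega) (by omega))⟩

/-- `Fin.ofNat` reduces modulo `L + 1`, which is harmless since `sampleContribution M L i` only
reads the levels `≤ L`. -/
noncomputable def tupleContribution (M : ℕ → ℕ) (L i : ℕ) (x : Fin (L + 1) → V) : V :=
  sampleContribution M L i fun k => x (Fin.ofNat (L + 1) k)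

lemma tupleContribution_eval {α : Type*} (M : ℕ → ℕ) (L i : ℕ) (u : ℕ → α → V) (a : α) :
    tupleContribution M L i (fun ℓ : Fin (L + 1) => u ℓ a)
      = sampleContribution M L i fun k => u k a :=
  sampleContribution_congr fun k hk => by
    simp [Nat.mod_eq_of_lt (Nat.lt_succ_of_le hk)]

end Combinatorics

section BootstrapMLMC

variable {Ω V : Type*} [MeasurableSpace Ω] {μ : Measure Ω}
  [NormedAddCommGroup V] [InnerProductSpace ℝ V]
  {M : ℕ → ℕ} {L : ℕ} {v : ℕ → Ω → V} {w : ℕ → ℕ → Ω → V}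

lemma memLp_sampleContribution {p : ENNReal} [IsFiniteMeasure μ] (i : ℕ)
    (hv : ∀ ℓ ≤ L, MemLp (v ℓ) p μ) :
    MemLp (fun ω => sampleContribution M L i fun k => v k ω) p μ := by
  refine memLp_finsetSum _ fun ℓ hℓ => ?_
  have hℓL : ℓ ≤ L := Nat.lt_succ_iff.mp (mem_range.mp (mem_filter.mp hℓ).1)
  refine ((hv ℓ hℓL).sub ?_).const_smul _
  split_ifs
  · exact memLp_const 0
  · exact hv _ (by omega)

variable [MeasurableSpace V] [BorelSpace V] [SecondCountableTopology V]

lemma measurable_tupleContribution (M : ℕ → ℕ) (L i : ℕ) :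
    Measurable (tupleContribution (V := V) M L i) := by
  unfold tupleContribution sampleContribution levelCorrection
  refine Finset.measurable_sum _ fun ℓ _ => ?_
  split_ifs <;> fun_prop

theorem integral_bootstrapEstimator [IsFiniteMeasure μ] (hM : ∀ ℓ ≤ L, M ℓ ≤ M 0)
    (hMpos : ∀ ℓ ≤ L, 1 ≤ M ℓ) (hv : ∀ ℓ ≤ L, Integrable (v ℓ) μ)
    (hid : ∀ i, IdentDistrib (fun ω (ℓ : Fin (L + 1)) => w i ℓ ω)
      (fun ω (ℓ : Fin (L + 1)) => v ℓ ω) μ μ) :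
    ∫ ω, bootstrapEstimator M L (fun i k => w i k ω) ∂μ = ∫ ω, v L ω ∂μ := by
  have hv_int : ∀ i ∈ range (M 0),
      Integrable (fun ω => tupleContribution M L i fun ℓ => v ℓ ω) μ := fun i _ => by
    simp only [tupleContribution_eval, ← memLp_one_iff_integrable] at hv ⊢
    exact memLp_sampleContribution i hv
  calc ∫ ω, bootstrapEstimator M L (fun i k => w i k ω) ∂μ
      = ∫ ω, ∑ i ∈ range (M 0), tupleContribution M L i (fun ℓ => w i ℓ ω) ∂μ := by
        simp only [tupleContribution_eval, bootstrapEstimator_eq_sum_sampleContribution hM]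
    _ = ∫ ω, ∑ i ∈ range (M 0), tupleContribution M L i (fun ℓ => v ℓ ω) ∂μ :=
        integral_sum_comp_eq_of_identDistrib (fun i _ => hid i)
          (fun i _ => measurable_tupleContribution M L i) hv_int
    _ = ∫ ω, v L ω ∂μ := by
        simp only [tupleContribution_eval, sum_sampleContribution_const hM hMpos]

variable [CompleteSpace V]

theorem normVariance_bootstrapEstimator [IsProbabilityMeasure μ]
    (hM : AntitoneOn M (Set.Iic (L + 1))) (hMend : M (L + 1) = 0)
    (hv : ∀ ℓ ≤ L, MemLp (v ℓ) 2 μ)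
    (hindep : iIndepFun (fun i ω (ℓ : Fin (L + 1)) => w i ℓ ω) μ)
    (hid : ∀ i, IdentDistrib (fun ω (ℓ : Fin (L + 1)) => w i ℓ ω)
      (fun ω (ℓ : Fin (L + 1)) => v ℓ ω) μ μ) :
    normVariance (fun ω => bootstrapEstimator M L (fun i k => w i k ω)) μ
      = ∑ ℓ ∈ range (L + 1), ((M ℓ : ℝ) - M (ℓ + 1)) *
          normVariance (fun ω => ∑ k ∈ range (ℓ + 1), (M k : ℝ)⁻¹ • levelCorrection (v · ω) k)
            μ := by
  have hM0 : ∀ ℓ ≤ L, M ℓ ≤ M 0 := fun ℓ hℓ => hM (by simp) (by simp; omega) ℓ.zero_le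
  calc normVariance (fun ω => bootstrapEstimator M L (fun i k => w i k ω)) μ
      = normVariance
          (fun ω => ∑ i ∈ range (M 0), tupleContribution M L i (fun ℓ => w i ℓ ω)) μ := by
        simp only [tupleContribution_eval, bootstrapEstimator_eq_sum_sampleContribution hM0]
    _ = ∑ i ∈ range (M 0), normVariance (fun ω => tupleContribution M L i fun ℓ => v ℓ ω) μ :=
        normVariance_sum_comp_of_iIndepFun hindep hid (measurable_tupleContribution M L)
          fun i _ => by simpa only [tupleContribution_eval] using memLp_sampleContribution i hv
    _ = _ := by
        refine sum_range_eq_sum_mul_of_antitoneOn hM hMend fun ℓ hℓ i hi => ?_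
        simp only [tupleContribution_eval, sampleContribution_of_mem_Ico hM hℓ hi]

end BootstrapMLMC

theorem stmt15_general {Ω V : Type*} [MeasurableSpace Ω] (μ : Measure Ω) [IsProbabilityMeasure μ]
    [NormedAddCommGroup V] [InnerProductSpace ℝ V] [CompleteSpace V]
    [MeasurableSpace V] [BorelSpace V] [SecondCountableTopology V]
    (L : ℕ) (v : ℕ → Ω → V) (w : ℕ → ℕ → Ω → V)
    (M : ℕ → ℕ)
    (hMdec : ∀ ℓ ≤ L, M (ℓ + 1) ≤ M ℓ) (hMend : M (L + 1) = 0) (hMpos : ∀ ℓ ≤ L, 1 ≤ M ℓ)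
    (hv2 : ∀ ℓ, MemLp (v ℓ) 2 μ)
    (hindep : iIndepFun
      (fun i ω => (fun ℓ : Fin (L + 1) => w i ℓ ω)) μ)
    (hid : ∀ i, IdentDistrib (fun ω => (fun ℓ : Fin (L + 1) => w i ℓ ω))
      (fun ω => (fun ℓ : Fin (L + 1) => v ℓ ω)) μ μ) :
    (∫ ω, ∑ ℓ ∈ Finset.range (L + 1), (M ℓ : ℝ)⁻¹ •
        ∑ i ∈ Finset.range (M ℓ), (w i ℓ ω - (if ℓ = 0 then 0 else w i (ℓ - 1) ω)) ∂μ)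
      = ∫ ω, v L ω ∂μ
    ∧ (∫ ω, ‖(∑ ℓ ∈ Finset.range (L + 1), (M ℓ : ℝ)⁻¹ •
          ∑ i ∈ Finset.range (M ℓ), (w i ℓ ω - (if ℓ = 0 then 0 else w i (ℓ - 1) ω))) -
          (∫ ω', ∑ ℓ ∈ Finset.range (L + 1), (M ℓ : ℝ)⁻¹ •
          ∑ i ∈ Finset.range (M ℓ),
            (w i ℓ ω' - (if ℓ = 0 then 0 else w i (ℓ - 1) ω')) ∂μ)‖ ^ 2 ∂μ)
      = ∑ ℓ ∈ Finset.range (L + 1), ((M ℓ : ℝ) - (M (ℓ + 1) : ℝ)) *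
          (∫ ω, ‖(∑ k ∈ Finset.range (ℓ + 1), (M k : ℝ)⁻¹ •
              (v k ω - (if k = 0 then 0 else v (k - 1) ω))) -
              (∫ ω', ∑ k ∈ Finset.range (ℓ + 1), (M k : ℝ)⁻¹ •
              (v k ω' - (if k = 0 then 0 else v (k - 1) ω')) ∂μ)‖ ^ 2 ∂μ) := by
  have hM : AntitoneOn M (Set.Iic (L + 1)) :=
    antitoneOn_of_succ_le Set.ordConnected_Iic fun ℓ _ _ hℓ => hMdec ℓ (by simpa using hℓ)
  exact ⟨integral_bootstrapEstimator (fun ℓ hℓ => hM (by simp) (by simp; omega) ℓ.zero_le) hMpos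
      (fun ℓ _ => (hv2 ℓ).integrable one_le_two) hid,
    normVariance_bootstrapEstimator hM hMend (fun ℓ _ => hv2 ℓ) hindep hid⟩

/-- Unbiasedness and variance decomposition of the bootstrap multilevel Monte Carlo
estimator: `w i ℓ` is sample `i` of the level-`ℓ` approximation, the vectors
`(w i 0, …, w i L)` being i.i.d. copies of `(v 0, …, v L)` across `i`. -/
theorem stmt15 {Ω V : Type*} [MeasurableSpace Ω] (μ : Measure Ω) [IsProbabilityMeasure μ]
    [NormedAddCommGroup V] [InnerProductSpace ℝ V] [CompleteSpace V]
    [MeasurableSpace V] [BorelSpace V] [SecondCountableTopology V]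
    (L : ℕ) (v : ℕ → Ω → V) (w : ℕ → ℕ → Ω → V)
    (M : ℕ → ℕ)
    (hMdec : ∀ ℓ ≤ L, M (ℓ + 1) ≤ M ℓ) (hMend : M (L + 1) = 0) (hMpos : ∀ ℓ ≤ L, 1 ≤ M ℓ)
    (hv2 : ∀ ℓ, MemLp (v ℓ) 2 μ)
    (hwmeas : ∀ i, Measurable (fun ω => (fun ℓ : Fin (L + 1) => w i ℓ ω)))
    (hindep : iIndepFun
      (fun i ω => (fun ℓ : Fin (L + 1) => w i ℓ ω)) μ)
    (hid : ∀ i, IdentDistrib (fun ω => (fun ℓ : Fin (L + 1) => w i ℓ ω))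
      (fun ω => (fun ℓ : Fin (L + 1) => v ℓ ω)) μ μ) :
    (∫ ω, ∑ ℓ ∈ Finset.range (L + 1), (M ℓ : ℝ)⁻¹ •
        ∑ i ∈ Finset.range (M ℓ), (w i ℓ ω - (if ℓ = 0 then 0 else w i (ℓ - 1) ω)) ∂μ)
      = ∫ ω, v L ω ∂μ
    ∧ (∫ ω, ‖(∑ ℓ ∈ Finset.range (L + 1), (M ℓ : ℝ)⁻¹ •
          ∑ i ∈ Finset.range (M ℓ), (w i ℓ ω - (if ℓ = 0 then 0 else w i (ℓ - 1) ω))) -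
          (∫ ω', ∑ ℓ ∈ Finset.range (L + 1), (M ℓ : ℝ)⁻¹ •
          ∑ i ∈ Finset.range (M ℓ),
            (w i ℓ ω' - (if ℓ = 0 then 0 else w i (ℓ - 1) ω')) ∂μ)‖ ^ 2 ∂μ)
      = ∑ ℓ ∈ Finset.range (L + 1), ((M ℓ : ℝ) - (M (ℓ + 1) : ℝ)) *
          (∫ ω, ‖(∑ k ∈ Finset.range (ℓ + 1), (M k : ℝ)⁻¹ •
              (v k ω - (if k = 0 then 0 else v (k - 1) ω))) -
              (∫ ω', ∑ k ∈ Finset.range (ℓ + 1), (M k : ℝ)⁻¹ •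
              (v k ω' - (if k = 0 then 0 else v (k - 1) ω')) ∂μ)‖ ^ 2 ∂μ) :=
  stmt15_general μ L v w M hMdec hMend hMpos hv2 hindep hid
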